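/- arXiv:2504.00405 — 4 statements merged into one kernel-verified Lean document; each statement's English description precedes it below -/
import Mathlib

section
/- The second-order condition for the pre-filter uniquely determines α_n: if k_n, k_{n-1}, k_{n-2} > 0, then ((α_n - 1) k_{n-2} - k_{n-1})/(k_{n-1} + k_{n-2}) · k_n²/2 - α_n (k_n + k_{n-1})²/2 + (α_n k_{n-1}/(k_{n-1} + k_{n-2})) (k_n + k_{n-1} + k_{n-2})²/2 = 0 if and only if α_n = k_n²/(k_{n-1} k_{n-2}). -/
/-! Clearing the denominator `k_{n-1} + k_{n-2}`, the sum of the `y''`-coefficients collapses to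
`(α k_{n-1} k_{n-2} - k_n²) / 2`, which vanishes exactly when `α = k_n² / (k_{n-1} k_{n-2})`. -/

theorem prefilter_second_order_sum_eq {K : Type*} [Field K] [CharZero K] (kn knm1 knm2 α : K)
    (hs : knm1 + knm2 ≠ 0) :
    (((α - 1) * knm2 - knm1) / (knm1 + knm2)) * (kn ^ 2 / 2)
      - α * ((kn + knm1) ^ 2 / 2)
      + (α * knm1 / (knm1 + knm2)) * ((kn + knm1 + knm2) ^ 2 / 2)
      = (α * knm1 * knm2 - kn ^ 2) / 2 := by
  field_simp
  ring

theorem stmt_4_general (kn knm1 knm2 α : ℝ) (hknm1 : 0 < knm1) (hknm2 : 0 < knm2) :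
    (((α - 1) * knm2 - knm1) / (knm1 + knm2)) * (kn ^ 2 / 2)
      - α * ((kn + knm1) ^ 2 / 2)
      + (α * knm1 / (knm1 + knm2)) * ((kn + knm1 + knm2) ^ 2 / 2) = 0
    ↔ α = kn ^ 2 / (knm1 * knm2) := by
  rw [prefilter_second_order_sum_eq kn knm1 knm2 α (by positivity), div_eq_zero_iff,
    or_iff_left two_ne_zero, sub_eq_zero, eq_div_iff (by positivity), mul_assoc]

theorem stmt_4 (kn knm1 knm2 α : ℝ) (hkn : 0 < kn) (hknm1 : 0 < knm1) (hknm2 : 0 < knm2) :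
    (((α - 1) * knm2 - knm1) / (knm1 + knm2)) * (kn ^ 2 / 2)
      - α * ((kn + knm1) ^ 2 / 2)
      + (α * knm1 / (knm1 + knm2)) * ((kn + knm1 + knm2) ^ 2 / 2) = 0
    ↔ α = kn ^ 2 / (knm1 * knm2) :=
  stmt_4_general kn knm1 knm2 α hknm1 hknm2
end

section
/- The variable-step pre-filtered Implicit Euler method with α_n = k_n²/(k_{n-1}k_{n-2}) is exact on quadratics: for y(t) = at² + bt + c, with t_{n-2}, t_{n-1} = t_{n-2} + k_{n-2}, t_n = t_{n-1} + k_{n-1}, t_{n+1} = t_n + k_n (all steps positive), setting ỹ_n = y(t_n) - (α_n/2)((2k_{n-2}/(k_{n-1}+k_{n-2})) y(t_n) - 2y(t_{n-1}) + (2k_{n-1}/(k_{n-1}+k_{n-2})) y(t_{n-2})), we have y(t_{n+1}) - ỹ_n = k_n y'(t_{n+1}). -/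
/-!
The bracket in the pre-filter is `2 k_{n-1} k_{n-2}` times the second divided difference
`y[t_{n-2}, t_{n-1}, t_n]`, which equals `a` for a quadratic. Hence the pre-filter changes
`y(t_n)` by `-a k_n²`, and this is exactly the local error of implicit Euler on a quadratic:
`y(t + k) - y(t) + a k² = k y'(t + k)`.
-/

theorem weighted_second_difference_of_quadratic {a b c k₁ k₂ : ℝ} {y : ℝ → ℝ}
    (hy : ∀ t, y t = a * t ^ 2 + b * t + c) (hk : k₁ + k₂ ≠ 0) (t : ℝ) :
    2 * k₂ / (k₁ + k₂) * y (t + k₂ + k₁) - 2 * y (t + k₂) + 2 * k₁ / (k₁ + k₂) * y t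
      = 2 * a * k₁ * k₂ := by
  simp only [hy]
  field_simp
  ring

theorem quadratic_sub_add_sq_eq_mul_deriv {a b c : ℝ} {y y' : ℝ → ℝ}
    (hy : ∀ t, y t = a * t ^ 2 + b * t + c) (hy' : ∀ t, y' t = 2 * a * t + b) (t k : ℝ) :
    y (t + k) - y t + a * k ^ 2 = k * y' (t + k) := by
  simp only [hy, hy']
  ring

theorem stmt_9_general (a b c kn knm1 knm2 : ℝ)
    (hknm1 : 0 < knm1) (hknm2 : 0 < knm2)
    (y : ℝ → ℝ) (hy : ∀ t, y t = a * t ^ 2 + b * t + c)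
    (y' : ℝ → ℝ) (hy' : ∀ t, y' t = 2 * a * t + b)
    (tnm2 tnm1 tn tnp1 α ytilde : ℝ)
    (h1 : tnm1 = tnm2 + knm2) (h2 : tn = tnm1 + knm1) (h3 : tnp1 = tn + kn)
    (hα : α = kn ^ 2 / (knm1 * knm2))
    (hyt : ytilde = y tn - (α / 2) *
      ((2 * knm2 / (knm1 + knm2)) * y tn - 2 * y tnm1 + (2 * knm1 / (knm1 + knm2)) * y tnm2)) :
    y tnp1 - ytilde = kn * y' tnp1 := by
  subst hyt h3 h2 h1
  rw [weighted_second_difference_of_quadratic hy (add_pos hknm1 hknm2).ne', hα]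
  have hcorrection : kn ^ 2 / (knm1 * knm2) / 2 * (2 * a * knm1 * knm2) = a * kn ^ 2 := by
    field_simp
  rw [hcorrection, ← quadratic_sub_add_sq_eq_mul_deriv hy hy']
  ring

theorem stmt_9 (a b c kn knm1 knm2 : ℝ)
    (hkn : 0 < kn) (hknm1 : 0 < knm1) (hknm2 : 0 < knm2)
    (y : ℝ → ℝ) (hy : ∀ t, y t = a * t ^ 2 + b * t + c)
    (y' : ℝ → ℝ) (hy' : ∀ t, y' t = 2 * a * t + b)
    (tnm2 tnm1 tn tnp1 α ytilde : ℝ)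
    (h1 : tnm1 = tnm2 + knm2) (h2 : tn = tnm1 + knm1) (h3 : tnp1 = tn + kn)
    (hα : α = kn ^ 2 / (knm1 * knm2))
    (hyt : ytilde = y tn - (α / 2) *
      ((2 * knm2 / (knm1 + knm2)) * y tn - 2 * y tnm1 + (2 * knm1 / (knm1 + knm2)) * y tnm2)) :
    y tnp1 - ytilde = kn * y' tnp1 :=
  stmt_9_general a b c kn knm1 knm2 hknm1 hknm2 y hy y' hy' tnm2 tnm1 tn tnp1 α ytilde h1 h2 h3 hα
    hyt
end

section
/- The variable-step pre-filter second-order condition determines α uniquely via exactness on t²: with grid t_1 = k_0, t_2 = k_0 + k_1, t_3 = k_0 + k_1 + k_2, t_4 = k_0 + k_1 + k_2 + k_3 (all k_i > 0), y_j = t_j², and ỹ_3 = y_3 - (α/2)((2k_1/(k_2+k_1)) y_3 - 2y_2 + (2k_2/(k_2+k_1)) y_1), the relation y_4 - ỹ_3 = k_3 · 2 t_4 holds if and only if α = k_3²/(k_2 k_1). -/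
/-! For `y = t²` the variable-step curvature is exactly `2 k₁ k₂` and the backward Euler step
`y₄ - y₃ ≈ k₃ · 2 t₄` has defect `-k₃²`, so the corrected relation reads `α k₁ k₂ = k₃²`. -/

theorem variableStepCurvature_sq {k₁ k₂ t₁ t₂ t₃ : ℝ} (hk : k₂ + k₁ ≠ 0)
    (ht₂ : t₂ = t₁ + k₁) (ht₃ : t₃ = t₂ + k₂) :
    2 * k₁ / (k₂ + k₁) * t₃ ^ 2 - 2 * t₂ ^ 2 + 2 * k₂ / (k₂ + k₁) * t₁ ^ 2 = 2 * k₁ * k₂ := by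
  subst ht₃ ht₂
  field_simp
  ring

theorem sq_sub_sq_eq_backwardEuler_sub_sq {k t₃ t₄ : ℝ} (ht₄ : t₄ = t₃ + k) :
    t₄ ^ 2 - t₃ ^ 2 = k * (2 * t₄) - k ^ 2 := by
  subst ht₄
  ring

theorem stmt_15_general (k0 k1 k2 k3 α : ℝ)
    (h1 : 0 < k1) (h2 : 0 < k2)
    (t : ℕ → ℝ) (ht1 : t 1 = k0) (ht2 : t 2 = k0 + k1) (ht3 : t 3 = k0 + k1 + k2)
    (ht4 : t 4 = k0 + k1 + k2 + k3)
    (y : ℕ → ℝ) (hy : ∀ j, y j = (t j) ^ 2)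
    (ytilde : ℝ)
    (hyt : ytilde = y 3 - (α / 2) *
      ((2 * k1 / (k2 + k1)) * y 3 - 2 * y 2 + (2 * k2 / (k2 + k1)) * y 1)) :
    y 4 - ytilde = k3 * (2 * t 4) ↔ α = k3 ^ 2 / (k2 * k1) := by
  have hκ : (2 * k1 / (k2 + k1)) * y 3 - 2 * y 2 + (2 * k2 / (k2 + k1)) * y 1 = 2 * k1 * k2 := by
    simp only [hy]
    exact variableStepCurvature_sq (by positivity) (by rw [ht2, ht1]) (by rw [ht3, ht2])
  have hstep : y 4 - y 3 = k3 * (2 * t 4) - k3 ^ 2 := by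
    simp only [hy]
    exact sq_sub_sq_eq_backwardEuler_sub_sq (by rw [ht4, ht3])
  rw [hyt, hκ, eq_div_iff (by positivity)]
  constructor <;> intro h <;> linarith

theorem stmt_15 (k0 k1 k2 k3 α : ℝ)
    (h0 : 0 < k0) (h1 : 0 < k1) (h2 : 0 < k2) (h3 : 0 < k3)
    (t : ℕ → ℝ) (ht1 : t 1 = k0) (ht2 : t 2 = k0 + k1) (ht3 : t 3 = k0 + k1 + k2)
    (ht4 : t 4 = k0 + k1 + k2 + k3)
    (y : ℕ → ℝ) (hy : ∀ j, y j = (t j) ^ 2)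
    (ytilde : ℝ)
    (hyt : ytilde = y 3 - (α / 2) *
      ((2 * k1 / (k2 + k1)) * y 3 - 2 * y 2 + (2 * k2 / (k2 + k1)) * y 1)) :
    y 4 - ytilde = k3 * (2 * t 4) ↔ α = k3 ^ 2 / (k2 * k1) :=
  stmt_15_general k0 k1 k2 k3 α h1 h2 t ht1 ht2 ht3 ht4 y hy ytilde hyt
end

section
/- If the second-order Taylor condition holds with positive steps, the local truncation error of the variable-step pre-filtered implicit Euler method on any polynomial of degree ≤ 2 is zero: for y a polynomial of degree at most 2 over ℝ, with α_n = k_n²/(k_{n-1}k_{n-2}), the residual y(t_{n+1}) + ((α_n-1)k_{n-2} - k_{n-1})/(k_{n-1}+k_{n-2}) · y(t_n) - α_n y(t_{n-1}) + (α_n k_{n-1}/(k_{n-1}+k_{n-2})) y(t_{n-2}) - k_n y'(t_{n+1}) equals zero. -/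
/-!
Expand every value of `y` in Taylor form about `t_{n+1}`; for a quadratic this expansion is
exact, so the residual is `y(t_{n+1})`, `y'(t_{n+1})` and `y''(t_{n+1}) / 2` weighted by the
zeroth, first and second moments of the scheme. The first two vanish for every `α`;
the second moment vanishes precisely because `α = k_n² / (k_{n-1} k_{n-2})`.
-/

open Polynomial

theorem Polynomial.eval_eq_taylor_of_degree_le_two {R : Type*} [CommRing R] {p : R[X]}
    (hp : p.degree ≤ 2) (s t : R) :
    p.eval t =
      p.eval s + (derivative p).eval s * (t - s) + (hasseDeriv 2 p).eval s * (t - s) ^ 2 := by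
  have hlt : (taylor s p).natDegree < 3 := by
    rw [natDegree_taylor]
    exact Nat.lt_succ_of_le (natDegree_le_of_degree_le hp)
  calc p.eval t = (taylor s p).eval (t - s) := by rw [taylor_eval, sub_add_cancel]
    _ = _ := by
      rw [eval_eq_sum_range' hlt]
      simp only [Finset.sum_range_succ, Finset.sum_range_zero, taylor_coeff, hasseDeriv_zero,
        hasseDeriv_one, LinearMap.id_apply]
      ring

theorem stmt_19_general (kn knm1 knm2 tnm2 tnm1 tn tnp1 α : ℝ)
    (hknm1 : 0 < knm1) (hknm2 : 0 < knm2)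
    (h1 : tnm1 = tnm2 + knm2) (h2 : tn = tnm1 + knm1) (h3 : tnp1 = tn + kn)
    (hα : α = kn ^ 2 / (knm1 * knm2))
    (y : Polynomial ℝ) (hdeg : y.degree ≤ 2) :
    y.eval tnp1 + (((α - 1) * knm2 - knm1) / (knm1 + knm2)) * y.eval tn
      - α * y.eval tnm1 + (α * knm1 / (knm1 + knm2)) * y.eval tnm2
      - kn * ((derivative y).eval tnp1) = 0 := by
  have hk : knm1 + knm2 ≠ 0 := by positivity
  have moment0 :
      1 + ((α - 1) * knm2 - knm1) / (knm1 + knm2) - α + α * knm1 / (knm1 + knm2) = 0 := by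
    field_simp
    ring
  have moment1 : ((α - 1) * knm2 - knm1) / (knm1 + knm2) * (-kn) - α * (-(kn + knm1))
      + α * knm1 / (knm1 + knm2) * (-(kn + knm1 + knm2)) - kn = 0 := by
    field_simp
    ring
  have moment2 : ((α - 1) * knm2 - knm1) / (knm1 + knm2) * kn ^ 2 - α * (kn + knm1) ^ 2
      + α * knm1 / (knm1 + knm2) * (kn + knm1 + knm2) ^ 2 = 0 := by
    subst hα
    field_simp
    ring
  have expand := Polynomial.eval_eq_taylor_of_degree_le_two hdeg tnp1
  obtain rfl : tn = tnp1 - kn := by linarith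
  obtain rfl : tnm1 = tnp1 - kn - knm1 := by linarith
  obtain rfl : tnm2 = tnp1 - kn - knm1 - knm2 := by linarith
  rw [expand (tnp1 - kn), expand (tnp1 - kn - knm1), expand (tnp1 - kn - knm1 - knm2)]
  linear_combination y.eval tnp1 * moment0 + (derivative y).eval tnp1 * moment1
    + (hasseDeriv 2 y).eval tnp1 * moment2

theorem stmt_19 (kn knm1 knm2 tnm2 tnm1 tn tnp1 α : ℝ)
    (hkn : 0 < kn) (hknm1 : 0 < knm1) (hknm2 : 0 < knm2)
    (h1 : tnm1 = tnm2 + knm2) (h2 : tn = tnm1 + knm1) (h3 : tnp1 = tn + kn)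
    (hα : α = kn ^ 2 / (knm1 * knm2))
    (y : Polynomial ℝ) (hdeg : y.degree ≤ 2) :
    y.eval tnp1 + (((α - 1) * knm2 - knm1) / (knm1 + knm2)) * y.eval tn
      - α * y.eval tnm1 + (α * knm1 / (knm1 + knm2)) * y.eval tnm2
      - kn * ((derivative y).eval tnp1) = 0 :=
  stmt_19_general kn knm1 knm2 tnm2 tnm1 tn tnp1 α hknm1 hknm2 h1 h2 h3 hα y hdeg
end
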